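/- Let n ≥ 2 and equip ℝⁿ with the standard inner product ⟨·,·⟩. For a nonzero vector α ∈ ℝⁿ let s_α denote the orthogonal reflection s_α(x) = x − 2(⟨α, x⟩/⟨α, α⟩)·α. Let α, β ∈ ℝⁿ be nonzero vectors such that the composite s_α ∘ s_β has infinite order in the orthogonal group O(n). Then any n polynomials p₁, …, pₙ ∈ ℝ[x₁, …, xₙ] each of which is invariant under both s_α and s_β (i.e. pᵢ ∘ s_α = pᵢ and pᵢ ∘ s_β = pᵢ) are algebraically dependent over ℝ. -/

import Mathlib

/-- The standard inner product `⟨x, y⟩ = Σᵢ xᵢ yᵢ` on `ℝⁿ`. -/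
noncomputable def Br {n : ℕ} (x y : Fin n → ℝ) : ℝ := ∑ i, x i * y i

/-- The orthogonal reflection `s_α(x) = x − 2(⟨α,x⟩/⟨α,α⟩)·α`. -/
noncomputable def reflR {n : ℕ} (α : Fin n → ℝ) (x : Fin n → ℝ) : Fin n → ℝ :=
  x - (2 * Br α x / Br α α) • α

/-!
If `p₁, …, pₙ` were algebraically independent, they would form a transcendence basis of
`ℝ[x₁, …, xₙ]`, so each coordinate `xⱼ` would satisfy a nonzero polynomial equation with
coefficients in `ℝ[p₁, …, pₙ]`. Away from the zero set of the product of the leading coefficients,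
the common level sets of the `pᵢ` are then finite. They are invariant under the injective linear
map `s_α ∘ s_β`, so every point of such a level set is periodic. But by Baire's theorem some point
avoids both that zero set and the fixed subspaces of all powers of `s_α ∘ s_β`, which are proper
because `s_α ∘ s_β` has infinite order.
-/

open MvPolynomial Set

theorem Br_eq_dotProduct {n : ℕ} (x y : Fin n → ℝ) : Br x y = x ⬝ᵥ y := rfl

theorem reflR_involutive {n : ℕ} (γ : Fin n → ℝ) : Function.Involutive (reflR γ) := by
  intro x
  rcases eq_or_ne γ 0 with rfl | hγ
  · simp [reflR]
  have hγγ : γ ⬝ᵥ γ ≠ 0 := dotProduct_self_eq_zero.not.2 hγ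
  have : 2 * (γ ⬝ᵥ x - 2 * (γ ⬝ᵥ x) / (γ ⬝ᵥ γ) * (γ ⬝ᵥ γ)) / (γ ⬝ᵥ γ) =
      -(2 * (γ ⬝ᵥ x) / (γ ⬝ᵥ γ)) := by
    field_simp; ring
  simp only [reflR, Br_eq_dotProduct, dotProduct_sub, dotProduct_smul, smul_eq_mul, this,
    neg_smul, sub_neg_eq_add, sub_add_cancel]

noncomputable def reflRLinear {n : ℕ} (γ : Fin n → ℝ) : Module.End ℝ (Fin n → ℝ) where
  toFun := reflR γ
  map_add' x y := by
    simp only [reflR, Br_eq_dotProduct, dotProduct_add, mul_add, add_div, add_smul]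
    abel
  map_smul' c x := by
    simp only [reflR, Br_eq_dotProduct, dotProduct_smul, smul_eq_mul, RingHom.id_apply, smul_sub,
      smul_smul]
    ring_nf

theorem MvPolynomial.dense_setOf_eval_ne_zero {σ : Type*} [Fintype σ] {g : MvPolynomial σ ℝ}
    (hg : g ≠ 0) : Dense {x : σ → ℝ | eval x g ≠ 0} := by
  refine interior_eq_empty_iff_dense_compl.1 (eq_empty_iff_forall_notMem.2 fun x hx => hg ?_)
  obtain ⟨ε, hε, hball⟩ := Metric.mem_nhds_iff.1 (mem_interior_iff_mem_nhds.1 hx)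
  rw [ball_pi x hε] at hball
  refine funext_set (fun i => Metric.ball (x i) ε) (fun i => ?_) fun y hy => ?_
  · rw [Real.ball_eq_Ioo]
    exact Ioo_infinite (by linarith)
  · rw [map_zero]; exact hball hy

theorem LinearMap.dense_setOf_apply_ne {𝕜 E F : Type*} [NontriviallyNormedField 𝕜]
    [AddCommGroup E] [Module 𝕜 E] [TopologicalSpace E] [ContinuousAdd E]
    [ContinuousSMul 𝕜 E] [AddCommGroup F] [Module 𝕜 F] {S T : E →ₗ[𝕜] F} (h : S ≠ T) :
    Dense {x | S x ≠ T x} := by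
  refine interior_eq_empty_iff_dense_compl.1 (not_nonempty_iff_eq_empty.1 fun hne => h ?_)
  exact eqLocus_eq_top.1 ((eqLocus S T).eq_top_of_nonempty_interior' hne)

theorem MvPolynomial.exists_eval_ne_zero_notMem_periodicPts {σ : Type*} [Fintype σ]
    {g : MvPolynomial σ ℝ} (hg : g ≠ 0) (T : Module.End ℝ (σ → ℝ))
    (hT : ∀ m, 0 < m → (⇑T)^[m] ≠ id) :
    ∃ a, eval a g ≠ 0 ∧ a ∉ Function.periodicPts T := by
  have hopen : ∀ m : ℕ, IsOpen {x | (T ^ (m + 1)) x ≠ x} := fun m =>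
    isOpen_ne_fun (T ^ (m + 1)).continuous_of_finiteDimensional continuous_id
  have hdense : ∀ m : ℕ, Dense {x | (T ^ (m + 1)) x ≠ x} := fun m =>
    LinearMap.dense_setOf_apply_ne (T := 1) fun h =>
      hT (m + 1) m.succ_pos (by rw [← Module.End.coe_pow, h]; rfl)
  obtain ⟨a, ha, haper⟩ := ((dense_setOf_eval_ne_zero hg).inter_of_isOpen_left
    (dense_iInter_of_isOpen_nat hopen hdense)
    (isOpen_ne_fun (continuous_eval g) continuous_const)).nonempty
  refine ⟨a, ha, ?_⟩
  rintro ⟨_, hm, hper⟩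
  obtain ⟨k, rfl⟩ := Nat.exists_eq_succ_of_ne_zero hm.ne'
  exact mem_iInter.1 haper k (by rw [Module.End.pow_apply]; exact hper)

theorem Function.Injective.mem_periodicPts_of_mapsTo {α : Type*} {f : α → α}
    (hf : Function.Injective f) {s : Set α} (hs : s.Finite) (h : MapsTo f s s) {x : α}
    (hx : x ∈ s) : x ∈ Function.periodicPts f := by
  have := hs.to_subtype
  obtain ⟨m, hm, hper⟩ := (h.restrict_inj.2 hf.injOn).mem_periodicPts ⟨x, hx⟩
  refine Function.mk_mem_periodicPts hm ?_
  have := congr_arg Subtype.val hper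
  rwa [h.iterate_restrict] at this

theorem AlgebraicIndependent.isAlgebraic_adjoin_range_mvPolynomial {K σ : Type*} [CommRing K]
    [IsDomain K] [Finite σ] {p : σ → MvPolynomial σ K} (hp : AlgebraicIndependent K p) :
    Algebra.IsAlgebraic (Algebra.adjoin K (range p)) (MvPolynomial σ K) :=
  (hp.isTranscendenceBasis_of_lift_trdeg_le_of_finite (by simp)).isAlgebraic

theorem MvPolynomial.eval_eq_of_mem_adjoin_range {K σ ι : Type*} [CommRing K]
    {p : ι → MvPolynomial σ K} {a b : σ → K} (h : ∀ i, eval b (p i) = eval a (p i))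
    {c : MvPolynomial σ K} (hc : c ∈ Algebra.adjoin K (range p)) : eval b c = eval a c := by
  simpa [coe_aeval_eq_eval] using AlgHom.eqOn_adjoin_iff (φ := aeval b) (ψ := aeval a).2
    (by rintro _ ⟨i, rfl⟩; simpa [coe_aeval_eq_eval] using h i) hc

theorem AlgebraicIndependent.exists_ne_zero_finite_fiber {K σ : Type*} [CommRing K] [IsDomain K]
    [Fintype σ] {p : σ → MvPolynomial σ K} (hp : AlgebraicIndependent K p) :
    ∃ g : MvPolynomial σ K, g ≠ 0 ∧
      ∀ a, eval a g ≠ 0 → {b | ∀ i, eval b (p i) = eval a (p i)}.Finite := by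
  set A := Algebra.adjoin K (range p)
  have := hp.isAlgebraic_adjoin_range_mvPolynomial
  choose P hP0 hP using fun j => Algebra.IsAlgebraic.isAlgebraic (R := A) (X j : MvPolynomial σ K)
  refine ⟨∏ j, ((P j).leadingCoeff : MvPolynomial σ K), ?_, fun a ha => ?_⟩
  · exact Finset.prod_ne_zero_iff.2 fun j _ => by simpa using hP0 j
  let φ (c : σ → K) : A →+* K := (eval c).comp A.val.toRingHom
  have hφ : ∀ j, (P j).map (φ a) ≠ 0 := fun j h => by
    have := congr_arg (Polynomial.coeff · (P j).natDegree) h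
    simp only [Polynomial.coeff_map, Polynomial.coeff_natDegree] at this
    rw [map_prod, Finset.prod_ne_zero_iff] at ha
    exact ha j (Finset.mem_univ j) this
  refine (Finite.pi fun j => Polynomial.finite_setOfPred_isRoot (hφ j)).subset
    fun b hb j _ => ?_
  -- Evaluation on `K[p]` is constant along the fiber, so `b j` is a root of `(P j).map (φ a)`.
  have hφb : φ a = φ b := RingHom.ext fun c => (eval_eq_of_mem_adjoin_range hb c.2).symm
  show Polynomial.IsRoot _ _
  rw [hφb, Polynomial.IsRoot, Polynomial.eval_map, ← (eval b).map_zero, ← hP j,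
    Polynomial.aeval_def, Polynomial.hom_eval₂, eval_X]
  rfl

theorem stmt19_general {n : ℕ} (α β : Fin n → ℝ)
    (hinf : ∀ m : ℕ, 0 < m → (reflR α ∘ reflR β)^[m] ≠ id)
    (p : Fin n → MvPolynomial (Fin n) ℝ)
    (hpα : ∀ i : Fin n, ∀ x : Fin n → ℝ,
      MvPolynomial.eval (reflR α x) (p i) = MvPolynomial.eval x (p i))
    (hpβ : ∀ i : Fin n, ∀ x : Fin n → ℝ,
      MvPolynomial.eval (reflR β x) (p i) = MvPolynomial.eval x (p i)) :
    ∃ F : MvPolynomial (Fin n) ℝ, F ≠ 0 ∧ MvPolynomial.aeval p F = 0 := by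
  by_contra! hdep
  have hp : AlgebraicIndependent ℝ p :=
    algebraicIndependent_iff.2 fun F hF => by_contra fun hF0 => hdep F hF0 hF
  obtain ⟨g, hg, hfinite⟩ := hp.exists_ne_zero_finite_fiber
  obtain ⟨a, ha, hnper⟩ :=
    exists_eval_ne_zero_notMem_periodicPts hg (reflRLinear α * reflRLinear β) hinf
  have hinj : Function.Injective (reflR α ∘ reflR β) :=
    (reflR_involutive α).injective.comp (reflR_involutive β).injective
  refine hnper (hinj.mem_periodicPts_of_mapsTo (hfinite a ha) (fun b hb i => ?_) fun _ => rfl)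
  rw [Function.comp_apply, hpα, hpβ, hb i]

/-- Key step in the proof of Theorem 1.1: if the composite reflection `s_α ∘ s_β` has infinite
order, then any `n` polynomials invariant under both `s_α` and `s_β` are algebraically
dependent over `ℝ`. -/
theorem stmt19 {n : ℕ} (hn : 2 ≤ n) (α β : Fin n → ℝ) (hα : α ≠ 0) (hβ : β ≠ 0)
    (hinf : ∀ m : ℕ, 0 < m → (reflR α ∘ reflR β)^[m] ≠ id)
    (p : Fin n → MvPolynomial (Fin n) ℝ)
    (hpα : ∀ i : Fin n, ∀ x : Fin n → ℝ,
      MvPolynomial.eval (reflR α x) (p i) = MvPolynomial.eval x (p i))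
    (hpβ : ∀ i : Fin n, ∀ x : Fin n → ℝ,
      MvPolynomial.eval (reflR β x) (p i) = MvPolynomial.eval x (p i)) :
    ∃ F : MvPolynomial (Fin n) ℝ, F ≠ 0 ∧ MvPolynomial.aeval p F = 0 :=
  stmt19_general α β hinf p hpα hpβ
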